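/- arXiv:0907.2098 — 6 statements merged into one kernel-verified Lean document; each statement's English description precedes it below -/
import Mathlib

section
/- If the complexity function ρ of an infinite sequence (u_n) over a finite alphabet satisfies liminf_{n→∞} ρ(n)/n < ∞, then the sequence has long repetitions: there exists ε > 0 and infinitely many natural numbers N such that the initial word u_1 u_2 … u_N contains two disjoint equal subwords each of length at least ε·N. -/
/-- Complexity function of a sequence `u` over an alphabet `A`:
the number of distinct words of length `n` occurring in `u`. -/
noncomputable def seqComplexity {A : Type*} (u : ℕ → A) (n : ℕ) : ℕ :=
  Set.ncard {w : Fin n → A | ∃ k : ℕ, ∀ i : Fin n, w i = u (k + i)}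

/-!
Among the `ρ(n) + 1` words of length `n` starting at positions `0, …, ρ(n)` two coincide, say
at `p < q ≤ ρ(n)`. Then `u` has period `d = q - p` on `[p, q + n)`, so the word of length
`ℓ = ⌈n / 2⌉` at `p` reappears at `p + g`, where `g` is the least multiple of `d` with `ℓ ≤ g`.
This is a repetition inside `u₁ … u_N` with `N = p + g + ℓ < ρ(n) + 2ℓ`, and `ρ(n) < κ n` for
infinitely many `n` makes `ℓ` a fixed fraction of `N`.
-/

section

variable {A : Type*}

lemma exists_lt_le_seqComplexity_factor_eq [Finite A] (u : ℕ → A) (n : ℕ) :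
    ∃ p q, p < q ∧ q ≤ seqComplexity u n ∧ ∀ j < n, u (p + j) = u (q + j) := by
  have hmaps : ∀ k ∈ Set.Iic (seqComplexity u n), (fun i : Fin n => u (k + i)) ∈
      {w : Fin n → A | ∃ k : ℕ, ∀ i : Fin n, w i = u (k + i)} :=
    fun k _ => ⟨k, fun _ => rfl⟩
  obtain ⟨x, hx, y, hy, hxy, hfxy⟩ :=
    Set.exists_ne_map_eq_of_ncard_lt_of_maps_to (by simp [seqComplexity]) hmaps
  have factor_eq : ∀ a b, (fun i : Fin n => u (a + i)) = (fun i : Fin n => u (b + i)) →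
      ∀ j < n, u (a + j) = u (b + j) :=
    fun a b hab j hj => congrFun hab ⟨j, hj⟩
  rcases hxy.lt_or_gt with hlt | hlt
  · exact ⟨x, y, hlt, hy, factor_eq x y hfxy⟩
  · exact ⟨y, x, hlt, hx, factor_eq y x hfxy.symm⟩

lemma apply_add_eq_apply_add_mul_add (u : ℕ → A) {p d n : ℕ}
    (h : ∀ j < n, u (p + j) = u (p + d + j)) (t : ℕ) :
    ∀ i, i + t * d < n + d → u (p + i) = u (p + t * d + i) := by
  induction t with
  | zero => simp
  | succ t ih =>
    intro i hi
    calc u (p + i) = u (p + t * d + i) := ih i (by rw [add_mul] at hi; omega)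
      _ = u (p + (t * d + i)) := by rw [add_assoc]
      _ = u (p + d + (t * d + i)) := h _ (by rw [add_mul] at hi; omega)
      _ = u (p + (t + 1) * d + i) := by congr 1; ring

lemma exists_repeat_of_factor_eq (u : ℕ → A) {p q n ℓ : ℕ} (hpq : p < q)
    (h : ∀ j < n, u (p + j) = u (q + j)) (hℓ : 2 * ℓ ≤ n + 1) :
    ∃ g, ℓ ≤ g ∧ g < ℓ + (q - p) ∧ ∀ i < ℓ, u (p + i) = u (p + g + i) := by
  set d := q - p
  have hd : 0 < d := Nat.sub_pos_of_lt hpq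
  have hper : ∀ j < n, u (p + j) = u (p + d + j) := fun j hj => by
    rw [h j hj, Nat.add_sub_cancel' hpq.le]
  have hle := Nat.div_mul_le_self (ℓ + d - 1) d
  have hlt := Nat.lt_div_mul_add (a := ℓ + d - 1) hd
  refine ⟨(ℓ + d - 1) / d * d, by omega, by omega, fun i hi => ?_⟩
  exact apply_add_eq_apply_add_mul_add u hper _ i (by omega)

lemma exists_repeat_of_seqComplexity [Finite A] (u : ℕ → A) (n : ℕ) :
    ∃ k m ℓ, n ≤ 2 * ℓ ∧ k + ℓ ≤ m ∧ m + ℓ < seqComplexity u n + 2 * ℓ ∧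
      ∀ i < ℓ, u (k + i) = u (m + i) := by
  obtain ⟨p, q, hpq, hq, h⟩ := exists_lt_le_seqComplexity_factor_eq u n
  obtain ⟨g, hg, hg', hrep⟩ := exists_repeat_of_factor_eq u hpq h (ℓ := (n + 1) / 2) (by omega)
  exact ⟨p, p + g, (n + 1) / 2, by omega, by omega, by omega, hrep⟩

end

/-- If the complexity function of a sequence over a finite alphabet satisfies
`liminf ρ(n)/n < ∞`, then the sequence has long repetitions. -/
theorem stmt0 {A : Type*} [Fintype A] (u : ℕ → A)
    (h : ∃ κ : ℝ, ∀ n₀ : ℕ, ∃ n : ℕ, n₀ ≤ n ∧ 1 ≤ n ∧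
      (seqComplexity u n : ℝ) < κ * n) :
    ∃ ε : ℝ, 0 < ε ∧ ∀ N₀ : ℕ, ∃ N : ℕ, N₀ ≤ N ∧
      ∃ k m ℓ : ℕ, (ε * N ≤ (ℓ : ℝ)) ∧ k + ℓ ≤ m ∧ m + ℓ ≤ N ∧
        ∀ i < ℓ, u (k + i) = u (m + i) := by
  obtain ⟨κ, hκ⟩ := h
  have hκ0 : 0 < κ := by
    obtain ⟨n, -, hn, hρ⟩ := hκ 0
    have : (1 : ℝ) ≤ n := by exact_mod_cast hn
    nlinarith [(seqComplexity u n).cast_nonneg (α := ℝ)]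
  refine ⟨1 / (2 * κ + 2), by positivity, fun N₀ => ?_⟩
  obtain ⟨n, hn, -, hρ⟩ := hκ N₀
  obtain ⟨k, m, ℓ, hnℓ, hkm, hmN, hrep⟩ := exists_repeat_of_seqComplexity u n
  refine ⟨m + ℓ, by omega, k, m, ℓ, ?_, hkm, le_rfl, hrep⟩
  have hnℓ' : (n : ℝ) ≤ 2 * ℓ := by exact_mod_cast hnℓ
  have hmN' : ((m + ℓ : ℕ) : ℝ) ≤ seqComplexity u n + 2 * ℓ := by exact_mod_cast hmN.le
  rw [div_mul_eq_mul_div, one_mul, div_le_iff₀ (by positivity)]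
  nlinarith
end

section
/- If a word W has prefix AAB where AB = BC for nonempty words A, B, C, and ℓ(AA) ≤ n where n = ℓ(AB), then AAA is a prefix of W. More generally, W has a prefix consisting of k copies of A, where k = ⌊n/ℓ(A)⌋ + 1; in particular k ≥ 2 and k·ℓ(A) > n. -/
/-!
From `A ++ B = B ++ C` one gets `A^j ++ B = B ++ C^j` for every `j`, so for `j ≥ 1` both
`A^j` and `A ++ B` are prefixes of `A^j ++ B = A ++ B ++ C^(j-1)`. Comparing lengths, `A^j`
is a prefix of `A ++ B` once `j * ℓ(A) ≤ ℓ(AB)`; prepending one more `A` and using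
`A ++ A ++ B = A ++ B ++ C` shows that `A^(j+1)` is a prefix of `A ++ B ++ C`.
-/

namespace List

variable {α : Type*} {A B C : List α}

theorem flatten_replicate_append_of_append_eq (heq : A ++ B = B ++ C) (j : ℕ) :
    (replicate j A).flatten ++ B = B ++ (replicate j C).flatten := by
  induction j with
  | zero => simp
  | succ j ih =>
    rw [replicate_succ', replicate_succ', flatten_append, flatten_append, flatten_singleton,
      flatten_singleton, append_assoc, heq, ← append_assoc, ih, append_assoc]

theorem flatten_replicate_prefix_of_append_eq (heq : A ++ B = B ++ C) {j : ℕ}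
    (hj : j * A.length ≤ (A ++ B).length) :
    (replicate j A).flatten <+: A ++ B := by
  cases j with
  | zero => simp
  | succ j =>
    have hAB : A ++ B <+: (replicate (j + 1) A).flatten ++ B := by
      rw [flatten_replicate_append_of_append_eq heq, heq, replicate_succ, flatten_cons,
        ← append_assoc]
      exact prefix_append _ _
    exact prefix_of_prefix_length_le (prefix_append _ _) hAB (by simpa using hj)

theorem flatten_replicate_succ_prefix_of_append_eq (heq : A ++ B = B ++ C) {j : ℕ}
    (hj : j * A.length ≤ (A ++ B).length) :
    (replicate (j + 1) A).flatten <+: A ++ B ++ C := by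
  rw [replicate_succ, flatten_cons, append_assoc, ← heq]
  exact (prefix_append_right_inj A).mpr (flatten_replicate_prefix_of_append_eq heq hj)

end List

theorem stmt2_general {α : Type*} (W A B C : List α) (n : ℕ)
    (hA : A ≠ [])
    (hpre : (A ++ B ++ C) <+: W) (heq : A ++ B = B ++ C)
    (hn : n = (A ++ B).length) :
    (2 * A.length ≤ n → (A ++ A ++ A) <+: W) ∧
      ((List.replicate (n / A.length + 1) A).flatten <+: W ∧
        2 ≤ n / A.length + 1 ∧ n < (n / A.length + 1) * A.length) := by
  have hApos : 0 < A.length := List.length_pos_iff.mpr hA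
  have hAn : A.length ≤ n := by simp [hn]
  refine ⟨fun h2 => ?_, ?_, ?_, ?_⟩
  · have h3 := List.flatten_replicate_succ_prefix_of_append_eq heq (j := 2) (hn ▸ h2)
    simpa using h3.trans hpre
  · subst hn
    exact (List.flatten_replicate_succ_prefix_of_append_eq heq
      (Nat.div_mul_le_self _ _)).trans hpre
  · have := (Nat.one_le_div_iff hApos).mpr hAn
    omega
  · exact Nat.mul_comm A.length _ ▸ Nat.lt_mul_div_succ n hApos

/-- Suppose `W` has prefix `A ++ B ++ C` with `A`, `B`, `C` nonempty and
`A ++ B = B ++ C` of length `n`. If `ℓ(AA) ≤ n` then `AAA` is a prefix of `W`;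
more generally, with `k = ⌊n / ℓ(A)⌋ + 1`, the word `A^k` is a prefix of `W`,
`k ≥ 2` and `k·ℓ(A) > n`. -/
theorem stmt2 {α : Type*} (W A B C : List α) (n : ℕ)
    (hA : A ≠ []) (hB : B ≠ []) (hC : C ≠ [])
    (hpre : (A ++ B ++ C) <+: W) (heq : A ++ B = B ++ C)
    (hn : n = (A ++ B).length) :
    (2 * A.length ≤ n → (A ++ A ++ A) <+: W) ∧
      ((List.replicate (n / A.length + 1) A).flatten <+: W ∧
        2 ≤ n / A.length + 1 ∧ n < (n / A.length + 1) * A.length) :=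
  stmt2_general W A B C n hA hpre heq hn
end

section
/- For any two filtrations W = W_0 ⊇ W_1 ⊇ W_2 ⊇ … and W = W'_0 ⊇ W'_1 ⊇ W'_2 ⊇ … of a finite dimensional vector space W over a field, there exists a basis of W that is simultaneously a basis of both filtrations, i.e., a basis of W containing a basis of every W_i and a basis of every W'_i. -/
/-!
Put `A i j = W i ⊓ W' j` and choose `C i j` complementing `A (i+1) j ⊔ A i (j+1)` in `A i j`.
Both filtrations stabilize, so they may be cut off to end in `0` without changing the `A i j`
that matter; descending induction on `i + j` then gives `A i j = ⨆ (a, b) ≥ (i, j), C a b`.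
The family `C` is independent: in the lexicographic order each `C i j` lies in `W' j` and is
disjoint from the sum `W (i+1) ⊔ A i (j+1)` of the later ones, by the modular law. A union of
bases of the `C i j` is then a basis of both filtrations.
-/

open Submodule

section Lattice

variable {α : Type*} [CompleteLattice α]

theorem le_iSup_ge_of_le_sup {A C : ℕ × ℕ → α} {N : ℕ}
    (hbot : ∀ p : ℕ × ℕ, N ≤ p.1 + p.2 → A p = ⊥)
    (hstep : ∀ p : ℕ × ℕ, A p ≤ C p ⊔ A (p.1 + 1, p.2) ⊔ A (p.1, p.2 + 1)) (p : ℕ × ℕ) :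
    A p ≤ ⨆ q ≥ p, C q := by
  suffices ∀ n p, N ≤ p.1 + p.2 + n → A p ≤ ⨆ q ≥ p, C q from this N p (by omega)
  intro n
  induction n with
  | zero => intro p hp; simp [hbot p hp]
  | succ n ih =>
    intro p hp
    have hmono : ∀ p' ≥ p, (⨆ q ≥ p', C q) ≤ ⨆ q ≥ p, C q := fun p' hp' =>
      biSup_mono fun q hq => hp'.trans hq
    refine (hstep p).trans (sup_le (sup_le (le_iSup₂_of_le p le_rfl le_rfl) ?_) ?_)
    · exact (ih _ (by simp only; omega)).trans (hmono _ (by simp [Prod.le_def]))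
    · exact (ih _ (by simp only; omega)).trans (hmono _ (by simp [Prod.le_def]))

variable [IsModularLattice α] [IsCompactlyGenerated α]

theorem iSupIndep_of_disjoint_iSup_gt {ι : Type*} [LinearOrder ι]
    {f : ι → α} (h : ∀ i, Disjoint (f i) (⨆ j > i, f j)) : iSupIndep f := by
  classical
  refine iSupIndep_iff_supIndep.2 fun s => ?_
  induction s using Finset.induction_on_min with
  | empty => exact Finset.supIndep_empty f
  | insert i s hi ih =>
    exact ih.insert
      ((h i).mono_right (Finset.sup_le fun j hj => le_iSup₂_of_le j (hi j hj) le_rfl))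

variable [ComplementedLattice α]

theorem exists_iSupIndep_inf_eq_iSup_ge_of_eq_bot {W W' : ℕ → α} (hW : Antitone W)
    (hW' : Antitone W') {N : ℕ} (hWN : W N = ⊥) (hW'N : W' N = ⊥) :
    ∃ C : ℕ × ℕ → α, iSupIndep C ∧ ∀ p : ℕ × ℕ, W p.1 ⊓ W' p.2 = ⨆ q ≥ p, C q := by
  set A : ℕ × ℕ → α := fun p => W p.1 ⊓ W' p.2
  have hA : Antitone A := fun p q h => inf_le_inf (hW h.1) (hW' h.2)
  set D : ℕ × ℕ → α := fun p => A (p.1 + 1, p.2) ⊔ A (p.1, p.2 + 1)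
  have hDA : ∀ p, D p ≤ A p := fun p =>
    sup_le (hA (by simp [Prod.le_def])) (hA (by simp [Prod.le_def]))
  choose C hDC hCA using fun p => IsModularLattice.exists_disjoint_and_sup_eq (hDA p)
  have hCle : ∀ p, C p ≤ A p := fun p => hCA p ▸ le_sup_right
  have hdisj : ∀ p : ℕ × ℕ, Disjoint (C p) (W (p.1 + 1) ⊔ A (p.1, p.2 + 1)) := by
    intro p
    have hCW' : C p ≤ W' p.2 := (hCle p).trans inf_le_right
    have hAW' : A (p.1, p.2 + 1) ≤ W' p.2 := inf_le_right.trans (hW' (Nat.le_succ _))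
    have hle : C p ⊓ (W (p.1 + 1) ⊔ A (p.1, p.2 + 1)) ≤ D p :=
      calc C p ⊓ (W (p.1 + 1) ⊔ A (p.1, p.2 + 1))
          ≤ (A (p.1, p.2 + 1) ⊔ W (p.1 + 1)) ⊓ W' p.2 :=
            le_inf (inf_le_right.trans (sup_comm _ _).le) (inf_le_left.trans hCW')
        _ = A (p.1, p.2 + 1) ⊔ A (p.1 + 1, p.2) := sup_inf_assoc_of_le _ hAW'
        _ = D p := sup_comm _ _
    exact disjoint_iff_inf_le.2 ((le_inf inf_le_left hle).trans (hDC p).symm.le_bot)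
  refine ⟨C, ?_, fun p => le_antisymm ?_ (iSup₂_le fun q hq => (hCle q).trans (hA hq))⟩
  · refine (iSupIndep_of_disjoint_iSup_gt (f := fun p : ℕ ×ₗ ℕ => C (ofLex p)) fun p =>
      (hdisj (ofLex p)).mono_right (iSup₂_le fun q hq => ?_)).comp toLex.injective
    rcases Prod.Lex.lt_iff.1 hq with h | ⟨h1, h2⟩
    · exact le_sup_of_le_left ((hCle _).trans (inf_le_left.trans (hW h)))
    · exact le_sup_of_le_right ((hCle _).trans (hA (by simp [Prod.le_def, h1, h2])))
  · refine le_iSup_ge_of_le_sup (A := A) (N := 2 * N) (fun q hq => ?_) (fun q => ?_) p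
    · rcases (by omega : N ≤ q.1 ∨ N ≤ q.2) with h | h
      · exact eq_bot_iff.2 (inf_le_left.trans ((hW h).trans hWN.le))
      · exact eq_bot_iff.2 (inf_le_right.trans ((hW' h).trans hW'N.le))
    · rw [← hCA q, sup_comm (D q), sup_assoc]

theorem exists_iSupIndep_inf_eq_biSup [WellFoundedLT α] {W W' : ℕ → α} (hW : Antitone W)
    (hW' : Antitone W') :
    ∃ C : ℕ × ℕ → α, iSupIndep C ∧ ∀ i j, ∃ s : Set (ℕ × ℕ), W i ⊓ W' j = ⨆ q ∈ s, C q := by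
  obtain ⟨N, hN⟩ := WellFoundedLT.antitone_chain_condition hW
  obtain ⟨N', hN'⟩ := WellFoundedLT.antitone_chain_condition hW'
  set M := max N N'
  have htrunc : ∀ F : ℕ → α, Antitone F → Antitone fun i => if i ≤ M then F i else ⊥ := by
    intro F hF i j hij
    dsimp only
    split_ifs <;> first | exact hF hij | exact bot_le | omega
  have hstable : ∀ {F : ℕ → α} {n}, n ≤ M → (∀ m, n ≤ m → F n = F m) → ∀ i, F i = F (min i M) :=
    fun hnM hF i => by
      rcases le_total i M with h | h
      · rw [min_eq_left h]
      · rw [min_eq_right h, ← hF i (hnM.trans h), hF M hnM]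
  obtain ⟨C, hC, hC_eq⟩ :=
    exists_iSupIndep_inf_eq_iSup_ge_of_eq_bot (htrunc W hW) (htrunc W' hW') (N := M + 1)
      (if_neg (by omega)) (if_neg (by omega))
  refine ⟨C, hC, fun i j => ⟨Set.Ici (min i M, min j M), ?_⟩⟩
  have hCp := hC_eq (min i M, min j M)
  simp only [min_le_right, if_true] at hCp
  rw [hstable (le_max_left N N') hN i, hstable (le_max_right N N') hN' j]
  exact hCp

end Lattice

theorem iSupIndep.exists_linearIndependent_le_span_inter {K V ι : Type*} [DivisionRing K]
    [AddCommGroup V] [Module K V] {C : ι → Submodule K V} (hC : iSupIndep C) :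
    ∃ B : Set V, LinearIndependent K ((↑) : B → V) ∧ ∀ i, C i ≤ span K (B ∩ C i) := by
  choose b hbC hspan hli using fun i => exists_linearIndependent K (C i : Set V)
  refine ⟨⋃ i, b i, linearIndepOn_id_iUnion_finite hli fun i t _ hi => ?_, fun i => ?_⟩
  · simp_rw [hspan, span_eq]
    exact hC.disjoint_biSup hi
  · calc C i = span K (b i) := by rw [hspan, span_eq]
      _ ≤ span K ((⋃ i, b i) ∩ C i) :=
        span_mono (Set.subset_inter (Set.subset_iUnion b i) (hbC i))

theorem span_inter_biSup_eq {K V ι : Type*} [Semiring K] [AddCommMonoid V] [Module K V]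
    {C : ι → Submodule K V} {B : Set V} (hB : ∀ i, C i ≤ span K (B ∩ C i)) (s : Set ι) :
    span K (B ∩ ↑(⨆ i ∈ s, C i)) = ⨆ i ∈ s, C i :=
  le_antisymm (span_le.2 Set.inter_subset_right) <| iSup₂_le fun i hi =>
    (hB i).trans (span_mono (Set.inter_subset_inter_right _ (SetLike.coe_subset_coe.2
      (le_biSup C hi))))

/-- Any two filtrations of a finite dimensional vector space admit a common
basis: a basis of `W` whose intersection with each member of either filtration
is a basis (spanning set of independent vectors) of that member. -/
theorem stmt3 {K V : Type*} [Field K] [AddCommGroup V] [Module K V]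
    [FiniteDimensional K V]
    (W W' : ℕ → Submodule K V)
    (hW : ∀ i j, i ≤ j → W j ≤ W i) (hW' : ∀ i j, i ≤ j → W' j ≤ W' i)
    (hW0 : W 0 = ⊤) (hW'0 : W' 0 = ⊤) :
    ∃ B : Set V, LinearIndependent K ((↑) : B → V) ∧
      (∀ i, Submodule.span K (B ∩ (W i : Set V)) = W i) ∧
      (∀ i, Submodule.span K (B ∩ (W' i : Set V)) = W' i) := by
  obtain ⟨C, hC, hCW⟩ := exists_iSupIndep_inf_eq_biSup hW hW'
  obtain ⟨B, hBli, hB⟩ := hC.exists_linearIndependent_le_span_inter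
  refine ⟨B, hBli, fun i => ?_, fun j => ?_⟩
  · obtain ⟨s, hs⟩ := hCW i 0
    rw [hW'0, inf_top_eq] at hs
    rw [hs]
    exact span_inter_biSup_eq hB s
  · obtain ⟨s, hs⟩ := hCW 0 j
    rw [hW0, top_inf_eq] at hs
    rw [hs]
    exact span_inter_biSup_eq hB s
end

section
/- Let M = [μ_{ij}] be a symmetric r×r real matrix with all entries positive, let L_i(x) = μ_{i1}x_1 + … + μ_{ir}x_r and Q(x) = xᵀMx. Then for any ε > 0 there exist positive integers a_1, …, a_r such that (1−ε)·Q(a) < r·a_i·L_i(a) < (1+ε)·Q(a) for every i = 1, …, r, where a = (a_1,…,a_r). -/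
/-!
If `x > 0` satisfies `xᵢ Lᵢ(x) = 1` for all `i`, then `Q(x) = r` and the required strict
inequalities hold at `x`. They cut out an open cone, so they also hold at `⌈N x⌉₊ / N` for
large `N`, hence at the positive integer vector `⌈N x⌉₊`.

Such an `x` is `exp ∘ s` for a global minimiser `s` of `G(s) = Q(exp ∘ s) - 2 ∑ sᵢ` on `ℝʳ`.
The minimiser exists because `G(s) ≥ ∑ (μᵢᵢ e^{2sᵢ} - 2sᵢ)` is coercive, and since `M` is
symmetric, `∂G/∂sᵢ = 2 xᵢ Lᵢ(x) - 2`.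
-/

open Filter Topology Matrix

theorem tendsto_sum_apply_cocompact_atTop {ι : Type*} [Fintype ι] {X : ι → Type*}
    [∀ i, TopologicalSpace (X i)] (f : ∀ i, X i → ℝ) (hbdd : ∀ i, BddBelow (Set.range (f i)))
    (hf : ∀ i, Tendsto (f i) (cocompact (X i)) atTop) :
    Tendsto (fun x => ∑ i, f i (x i)) (cocompact (∀ i, X i)) atTop := by
  classical
  choose b hb using hbdd
  rw [← coprodᵢ_cocompact, tendsto_atTop]
  intro C
  refine mem_coprodᵢ_iff.2 fun i => ⟨_, (hf i).eventually_ge_atTop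
    (C - ∑ j ∈ Finset.univ \ {i}, b j), fun x hx => ?_⟩
  calc C ≤ f i (x i) + ∑ j ∈ Finset.univ \ {i}, b j := sub_le_iff_le_add.mp hx
    _ = ∑ j, Function.update b i (f i (x i)) j :=
      (Finset.sum_update_of_mem (Finset.mem_univ i) _ _).symm
    _ ≤ ∑ i, f i (x i) := Finset.sum_le_sum fun j _ => by
        rcases eq_or_ne j i with rfl | hj
        · simp
        · simpa [hj] using hb j (Set.mem_range_self _)

theorem tendsto_mul_exp_sq_sub_cocompact_atTop {c : ℝ} (hc : 0 < c) :
    Tendsto (fun u => c * Real.exp u ^ 2 - 2 * u) (cocompact ℝ) atTop := by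
  rw [cocompact_eq_atBot_atTop, tendsto_sup]
  constructor
  · refine tendsto_atTop_mono (fun u => ?_) (tendsto_neg_atBot_atTop.const_mul_atTop two_pos)
    nlinarith [sq_nonneg (Real.exp u)]
  · have hpoly : Tendsto (fun t => t * (c * t - 2)) atTop atTop :=
      tendsto_id.atTop_mul_atTop₀
        (tendsto_atTop_add_const_right _ _ (tendsto_id.const_mul_atTop hc))
    refine tendsto_atTop_mono (fun u => ?_) (hpoly.comp Real.tendsto_exp_atTop)
    have := Real.add_one_le_exp u
    simp only [Function.comp_apply]
    nlinarith

theorem sum_diag_mul_sq_le_dotProduct_mulVec {ι : Type*} [Fintype ι] {M : Matrix ι ι ℝ}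
    (hM : ∀ i j, 0 ≤ M i j) {x : ι → ℝ} (hx : ∀ i, 0 ≤ x i) :
    ∑ i, M i i * x i ^ 2 ≤ x ⬝ᵥ M *ᵥ x := by
  refine Finset.sum_le_sum fun i _ => ?_
  have : M i i * x i ≤ (M *ᵥ x) i :=
    Finset.single_le_sum (f := fun j => M i j * x j) (fun j _ => mul_nonneg (hM i j) (hx j))
      (Finset.mem_univ i)
  nlinarith [hx i]

theorem Matrix.IsSymm.hasDerivAt_dotProduct_mulVec {ι : Type*} [Fintype ι] {M : Matrix ι ι ℝ}
    (hM : M.IsSymm) {x : ℝ → ι → ℝ} {x' : ι → ℝ} {t : ℝ} (hx : HasDerivAt x x' t) :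
    HasDerivAt (fun u => x u ⬝ᵥ M *ᵥ x u) (2 * (x' ⬝ᵥ M *ᵥ x t)) t := by
  have hxk := hasDerivAt_pi.1 hx
  have hMx : HasDerivAt (fun u => M *ᵥ x u) (M *ᵥ x') t :=
    hasDerivAt_pi.2 fun k => HasDerivAt.fun_sum fun l _ => (hxk l).const_mul (M k l)
  have := HasDerivAt.fun_sum (u := Finset.univ) fun k _ => (hxk k).mul (hasDerivAt_pi.1 hMx k)
  refine this.congr_deriv ?_
  have hsymm : x t ⬝ᵥ M *ᵥ x' = x' ⬝ᵥ M *ᵥ x t := by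
    rw [← dotProduct_transpose_mulVec, hM.eq]
  rw [Finset.sum_add_distrib]
  change x' ⬝ᵥ M *ᵥ x t + x t ⬝ᵥ M *ᵥ x' = _
  rw [hsymm]; ring

theorem exists_pos_mul_mulVec_eq_one {ι : Type*} [Fintype ι] {M : Matrix ι ι ℝ} (hM : M.IsSymm)
    (hdiag : ∀ i, 0 < M i i) (hnonneg : ∀ i j, 0 ≤ M i j) :
    ∃ x : ι → ℝ, (∀ i, 0 < x i) ∧ ∀ i, x i * (M *ᵥ x) i = 1 := by
  classical
  set G : (ι → ℝ) → ℝ := fun s => (Real.exp ∘ s) ⬝ᵥ M *ᵥ (Real.exp ∘ s) - 2 * ∑ i, s i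
  have hG_cont : Continuous G := by
    have : Continuous fun s : ι → ℝ => Real.exp ∘ s := by fun_prop
    exact (this.dotProduct (continuous_const.matrix_mulVec this)).sub (by fun_prop)
  have hG_tendsto : Tendsto G (cocompact _) atTop := by
    have hg := fun i => tendsto_mul_exp_sq_sub_cocompact_atTop (hdiag i)
    have hbdd : ∀ i, BddBelow (Set.range fun u => M i i * Real.exp u ^ 2 - 2 * u) := fun i => by
      have hcont : Continuous fun u => M i i * Real.exp u ^ 2 - 2 * u := by fun_prop
      obtain ⟨u₀, hu₀⟩ := hcont.exists_forall_le (hg i)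
      exact ⟨_, Set.forall_mem_range.2 hu₀⟩
    refine tendsto_atTop_mono (fun s => ?_) (tendsto_sum_apply_cocompact_atTop _ hbdd hg)
    rw [Finset.sum_sub_distrib, ← Finset.mul_sum]
    exact sub_le_sub_right (sum_diag_mul_sq_le_dotProduct_mulVec hnonneg
      (x := Real.exp ∘ s) fun i => (Real.exp_pos (s i)).le) _
  obtain ⟨s, hs⟩ := hG_cont.exists_forall_le hG_tendsto
  refine ⟨Real.exp ∘ s, fun i => Real.exp_pos _, fun i => ?_⟩
  have hmin : IsLocalMin (fun u => G (Function.update s i u)) (s i) :=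
    Eventually.of_forall fun u => by simpa only [Function.update_eq_self] using hs _
  have hcurve : HasDerivAt (fun u => Real.exp ∘ Function.update s i u)
      (Pi.single i (Real.exp (s i))) (s i) := by
    refine hasDerivAt_pi.2 fun k => ?_
    refine ((hasDerivAt_pi.1 (hasDerivAt_update s i (s i)) k).exp).congr_deriv ?_
    rcases eq_or_ne k i with rfl | hk <;> simp [*]
  have hsum : HasDerivAt (fun u => ∑ k, Function.update s i u k) 1 (s i) := by
    simp only [Finset.sum_update_of_mem (Finset.mem_univ i)]
    exact (hasDerivAt_id _).add_const _
  have hderiv := (hM.hasDerivAt_dotProduct_mulVec hcurve).sub (hsum.const_mul 2)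
  rw [Function.update_eq_self, single_dotProduct] at hderiv
  have := hmin.hasDerivAt_eq_zero hderiv
  simp only [Function.comp_apply] at this ⊢
  linarith

theorem exists_pos_nat_mem_of_isOpen_of_smul_mem {ι : Type*} {U : Set (ι → ℝ)} (hU : IsOpen U)
    (hcone : ∀ c : ℝ, 0 < c → ∀ y ∈ U, c • y ∈ U) {x : ι → ℝ} (hx : ∀ i, 0 < x i)
    (hxU : x ∈ U) : ∃ a : ι → ℕ, (∀ i, 0 < a i) ∧ (fun i => (a i : ℝ)) ∈ U := by
  have hlim : Tendsto (fun N : ℕ => fun i => (⌈x i * N⌉₊ : ℝ) / N) atTop (𝓝 x) :=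
    tendsto_pi_nhds.2 fun i =>
      (tendsto_nat_ceil_mul_div_atTop (hx i).le).comp tendsto_natCast_atTop_atTop
  obtain ⟨N, hNU, hN⟩ := ((hlim.eventually (hU.mem_nhds hxU)).and (eventually_gt_atTop 0)).exists
  refine ⟨fun i => ⌈x i * N⌉₊, fun i => Nat.ceil_pos.2 (by have := hx i; positivity), ?_⟩
  convert hcone N (by positivity) _ hNU using 1
  funext i
  simp only [Pi.smul_apply, smul_eq_mul]
  field_simp

/-- Lemma of Autissier/Levin: for a symmetric matrix `M` with positive entries,
with linear forms `L i` and quadratic form `Q`, for every `ε > 0` there are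
positive integers `a₁,…,a_r` with `(1−ε)Q(a) < r·aᵢ·Lᵢ(a) < (1+ε)Q(a)` for all `i`. -/
theorem stmt4 {r : ℕ} (hr : 0 < r) (M : Matrix (Fin r) (Fin r) ℝ)
    (hsymm : M.IsSymm) (hpos : ∀ i j, 0 < M i j)
    (L : (Fin r → ℝ) → Fin r → ℝ)
    (hL : ∀ x i, L x i = ∑ j, M i j * x j)
    (Q : (Fin r → ℝ) → ℝ)
    (hQ : ∀ x, Q x = ∑ i, x i * L x i)
    (ε : ℝ) (hε : 0 < ε) :
    ∃ a : Fin r → ℕ, (∀ i, 0 < a i) ∧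
      ∀ i, (1 - ε) * Q (fun j => (a j : ℝ)) <
            (r : ℝ) * (a i : ℝ) * L (fun j => (a j : ℝ)) i ∧
          (r : ℝ) * (a i : ℝ) * L (fun j => (a j : ℝ)) i <
            (1 + ε) * Q (fun j => (a j : ℝ)) := by
  obtain rfl : L = fun y => M *ᵥ y := funext₂ hL
  obtain rfl : Q = fun y => y ⬝ᵥ M *ᵥ y := funext hQ
  set U : Set (Fin r → ℝ) := {y | ∀ i, (1 - ε) * (y ⬝ᵥ M *ᵥ y) < r * y i * (M *ᵥ y) i ∧
    r * y i * (M *ᵥ y) i < (1 + ε) * (y ⬝ᵥ M *ᵥ y)}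
  have hU : IsOpen U := by
    have hMc : Continuous fun y : Fin r → ℝ => M *ᵥ y :=
      continuous_const.matrix_mulVec continuous_id
    have hQc : Continuous fun y : Fin r → ℝ => y ⬝ᵥ M *ᵥ y := continuous_id.dotProduct hMc
    simp only [U, Set.ofPred_forall, Set.ofPred_and]
    refine isOpen_iInter_of_finite fun i => (isOpen_lt ?_ ?_).inter (isOpen_lt ?_ ?_) <;> fun_prop
  have hcone : ∀ c : ℝ, 0 < c → ∀ y ∈ U, c • y ∈ U := by
    intro c hc y hy i
    simp only [mulVec_smul, dotProduct_smul, smul_dotProduct, Pi.smul_apply, smul_eq_mul]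
    have hc2 : 0 < c * c := mul_pos hc hc
    constructor <;> nlinarith [hy i]
  obtain ⟨x, hx, hxM⟩ := exists_pos_mul_mulVec_eq_one hsymm (fun i => hpos i i)
    fun i j => (hpos i j).le
  have hxU : x ∈ U := by
    have hQx : x ⬝ᵥ M *ᵥ x = r := by simp [dotProduct, hxM]
    intro i
    rw [hQx, mul_assoc, hxM]
    have : (0 : ℝ) < r := Nat.cast_pos.2 hr
    constructor <;> nlinarith
  exact exists_pos_nat_mem_of_isOpen_of_smul_mem hU hcone hx hxU
end

section
/- Let M be a symmetric r×r real matrix with all entries positive, and let L_i(x) = Σ_j μ_{ij} x_j. Then there exists a point a = (a_1,…,a_r) with all coordinates strictly positive real numbers and a_1 + … + a_r = 1 such that a_1 L_1(a) = a_2 L_2(a) = … = a_r L_r(a). -/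
/-!
Instead of a fixed point argument, maximize `(∏ xᵢ)² / (xᵀ M x)ʳ` over the standard simplex.
This function is invariant under scaling, so its maximizer `a`, which lies in the
interior because the product vanishes on the boundary, also maximizes it on the closed positive
orthant. Along the line `a + t eₖ` the quadratic form is `Q + 2 Lₖ(a) t + μₖₖ t²` (by symmetry
of `M`) and the product is `(aₖ + t) Pₖ`, so the first-order condition at `t = 0` reads
`r aₖ Lₖ(a) = aᵀ M a`, the same number for every `k`.
-/

open Finset Matrix

namespace Matrix

variable {ι : Type*} [Fintype ι] {M : Matrix ι ι ℝ}

lemma mulVec_apply_pos {x : ι → ℝ} (hpos : ∀ i j, 0 < M i j) (hx : 0 ≤ x) (hx0 : x ≠ 0) (i : ι) :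
    0 < (M *ᵥ x) i := by
  obtain ⟨j, hj⟩ := Function.ne_iff.mp hx0
  exact sum_pos' (fun j _ => mul_nonneg (hpos i j).le (hx j))
    ⟨j, mem_univ j, mul_pos (hpos i j) ((hx j).lt_of_ne' hj)⟩

lemma dotProduct_mulVec_self_pos {x : ι → ℝ} (hpos : ∀ i j, 0 < M i j) (hx : 0 ≤ x)
    (hx0 : x ≠ 0) : 0 < x ⬝ᵥ M *ᵥ x := by
  obtain ⟨j, hj⟩ := Function.ne_iff.mp hx0
  exact sum_pos' (fun i _ => mul_nonneg (hx i) (mulVec_apply_pos hpos hx hx0 i).le)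
    ⟨j, mem_univ j, mul_pos ((hx j).lt_of_ne' hj) (mulVec_apply_pos hpos hx hx0 j)⟩

lemma dotProduct_mulVec_self_pos_of_mem_stdSimplex (hpos : ∀ i j, 0 < M i j) {x : ι → ℝ}
    (hx : x ∈ stdSimplex ℝ ι) : 0 < x ⬝ᵥ M *ᵥ x := by
  refine dotProduct_mulVec_self_pos hpos hx.1 ?_
  rintro rfl
  simp [stdSimplex] at hx

lemma smul_dotProduct_mulVec_smul (c : ℝ) (x : ι → ℝ) :
    (c • x) ⬝ᵥ M *ᵥ (c • x) = c ^ 2 * (x ⬝ᵥ M *ᵥ x) := by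
  rw [mulVec_smul, smul_dotProduct, dotProduct_smul, smul_eq_mul, smul_eq_mul]
  ring

lemma _root_.Finset.prod_univ_smul_apply (c : ℝ) (x : ι → ℝ) :
    ∏ i, (c • x) i = c ^ Fintype.card ι * ∏ i, x i := by
  simp [prod_mul_distrib]

lemma _root_.Finset.prod_univ_add_single_apply [DecidableEq ι] (x : ι → ℝ) (k : ι) (t : ℝ) :
    ∏ i, (x + Pi.single k t : ι → ℝ) i = (x k + t) * ∏ i ∈ univ.erase k, x i := by
  rw [← mul_prod_erase univ _ (mem_univ k)]
  congr 1
  · simp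
  · exact prod_congr rfl fun i hi => by simp [ne_of_mem_erase hi]

lemma IsSymm.add_single_dotProduct_mulVec_add_single [DecidableEq ι] (hM : M.IsSymm)
    (x : ι → ℝ) (k : ι) (t : ℝ) :
    (x + Pi.single k t) ⬝ᵥ M *ᵥ (x + Pi.single k t)
      = x ⬝ᵥ M *ᵥ x + 2 * (M *ᵥ x) k * t + M k k * t ^ 2 := by
  have hcross : x ⬝ᵥ M *ᵥ Pi.single k t = (M *ᵥ x) k * t := by
    rw [dotProduct_mulVec, ← mulVec_transpose, hM.eq, dotProduct_single]
  simp only [mulVec_add, dotProduct_add, add_dotProduct, hcross, single_dotProduct]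
  simp only [mulVec_single, Pi.smul_apply, col_apply, MulOpposite.smul_eq_mul_unop,
    MulOpposite.unop_op]
  ring

noncomputable def prodSqDivQuadFormPow (M : Matrix ι ι ℝ) (x : ι → ℝ) : ℝ :=
  (∏ i, x i) ^ 2 / (x ⬝ᵥ M *ᵥ x) ^ Fintype.card ι

lemma prodSqDivQuadFormPow_smul {c : ℝ} (hc : c ≠ 0) (x : ι → ℝ) :
    M.prodSqDivQuadFormPow (c • x) = M.prodSqDivQuadFormPow x := by
  simp only [prodSqDivQuadFormPow, prod_univ_smul_apply, smul_dotProduct_mulVec_smul, mul_pow,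
    ← pow_mul]
  rw [mul_comm (Fintype.card ι) 2]
  exact mul_div_mul_left _ _ (pow_ne_zero _ hc)

lemma continuousOn_prodSqDivQuadFormPow (hpos : ∀ i j, 0 < M i j) :
    ContinuousOn M.prodSqDivQuadFormPow (stdSimplex ℝ ι) :=
  ContinuousOn.div (by fun_prop) (by fun_prop) fun _ hx =>
    pow_ne_zero _ (dotProduct_mulVec_self_pos_of_mem_stdSimplex hpos hx).ne'

lemma exists_pos_forall_prod_sq_mul_le (hpos : ∀ i j, 0 < M i j) [Nonempty ι] :
    ∃ a ∈ stdSimplex ℝ ι, (∀ i, 0 < a i) ∧ ∀ x, 0 ≤ x →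
      (∏ i, x i) ^ 2 * (a ⬝ᵥ M *ᵥ a) ^ Fintype.card ι
        ≤ (∏ i, a i) ^ 2 * (x ⬝ᵥ M *ᵥ x) ^ Fintype.card ι := by
  have hcentre : (fun _ => (Fintype.card ι : ℝ)⁻¹) ∈ stdSimplex ℝ ι :=
    ⟨fun _ => by positivity, by simp⟩
  obtain ⟨a, ha, hmax⟩ := (isCompact_stdSimplex ℝ ι).exists_isMaxOn ⟨_, hcentre⟩
    (continuousOn_prodSqDivQuadFormPow hpos)
  have hfa : 0 < M.prodSqDivQuadFormPow a :=
    (div_pos (pow_pos (prod_pos fun _ _ => by positivity) _)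
      (pow_pos (dotProduct_mulVec_self_pos_of_mem_stdSimplex hpos hcentre) _)).trans_le
      (hmax hcentre)
  have hapos : ∀ i, 0 < a i := fun i => (ha.1 i).lt_of_ne' fun hi => by
    simp [prodSqDivQuadFormPow, prod_eq_zero (mem_univ i) hi] at hfa
  refine ⟨a, ha, hapos, fun x hx => ?_⟩
  rcases eq_or_ne x 0 with rfl | hx0
  · simp
  have hs : 0 < ∑ i, x i := by
    obtain ⟨j, hj⟩ := Function.ne_iff.mp hx0
    exact sum_pos' (fun i _ => hx i) ⟨j, mem_univ j, (hx j).lt_of_ne' hj⟩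
  have hy : (∑ i, x i)⁻¹ • x ∈ stdSimplex ℝ ι :=
    ⟨fun i => smul_nonneg (inv_nonneg.2 hs.le) (hx i), by simp [← mul_sum, hs.ne']⟩
  have hle : M.prodSqDivQuadFormPow ((∑ i, x i)⁻¹ • x) ≤ M.prodSqDivQuadFormPow a := hmax hy
  rwa [prodSqDivQuadFormPow_smul (inv_ne_zero hs.ne'), prodSqDivQuadFormPow,
    prodSqDivQuadFormPow, div_le_div_iff₀ (pow_pos (dotProduct_mulVec_self_pos hpos hx hx0) _)
    (pow_pos (dotProduct_mulVec_self_pos_of_mem_stdSimplex hpos ha) _)] at hle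

lemma IsSymm.isLocalMin_along_single_of_forall_prod_sq_mul_le [DecidableEq ι] (hM : M.IsSymm)
    {a : ι → ℝ} (ha : ∀ i, 0 < a i)
    (hmax : ∀ x, 0 ≤ x → (∏ i, x i) ^ 2 * (a ⬝ᵥ M *ᵥ a) ^ Fintype.card ι
      ≤ (∏ i, a i) ^ 2 * (x ⬝ᵥ M *ᵥ x) ^ Fintype.card ι) (k : ι) :
    IsLocalMin (fun t => (∏ i, a i) ^ 2
      * (a ⬝ᵥ M *ᵥ a + 2 * (M *ᵥ a) k * t + M k k * t ^ 2) ^ Fintype.card ι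
      - ((a k + t) * ∏ i ∈ univ.erase k, a i) ^ 2 * (a ⬝ᵥ M *ᵥ a) ^ Fintype.card ι) 0 := by
  filter_upwards [Ioi_mem_nhds (neg_lt_zero.2 (ha k))] with t ht
  have hnonneg : 0 ≤ a + Pi.single k t := by
    intro i
    rcases eq_or_ne i k with rfl | hik
    · simp only [Pi.zero_apply, Pi.add_apply, Pi.single_eq_same]
      linarith [Set.mem_Ioi.mp ht]
    · simpa [hik] using (ha i).le
  have hle := hmax _ hnonneg
  rw [prod_univ_add_single_apply, hM.add_single_dotProduct_mulVec_add_single] at hle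
  simpa [mul_prod_erase univ a (mem_univ k)] using hle

lemma IsSymm.card_mul_mul_mulVec_eq_of_forall_prod_sq_mul_le (hM : M.IsSymm) {a : ι → ℝ}
    (ha : ∀ i, 0 < a i) (hQ : a ⬝ᵥ M *ᵥ a ≠ 0)
    (hmax : ∀ x, 0 ≤ x → (∏ i, x i) ^ 2 * (a ⬝ᵥ M *ᵥ a) ^ Fintype.card ι
      ≤ (∏ i, a i) ^ 2 * (x ⬝ᵥ M *ᵥ x) ^ Fintype.card ι) (k : ι) :
    Fintype.card ι * (a k * (M *ᵥ a) k) = a ⬝ᵥ M *ᵥ a := by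
  classical
  have hmin := hM.isLocalMin_along_single_of_forall_prod_sq_mul_le ha hmax k
  set n := Fintype.card ι
  set Q := a ⬝ᵥ M *ᵥ a
  set L := (M *ᵥ a) k
  set P := ∏ i ∈ univ.erase k, a i
  have hP : 0 < P := prod_pos fun i _ => ha i
  rw [← mul_prod_erase univ a (mem_univ k)] at hmin
  have hq : HasDerivAt (fun t => Q + 2 * L * t + M k k * t ^ 2) (2 * L) 0 := by
    simpa using (((hasDerivAt_id 0).const_mul (2 * L)).const_add Q).fun_add
      ((hasDerivAt_pow 2 0).const_mul (M k k))
  have hp : HasDerivAt (fun t => (a k + t) * P) P 0 := by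
    simpa using ((hasDerivAt_id 0).const_add (a k)).mul_const P
  have hcrit := hmin.hasDerivAt_eq_zero <|
    (((hq.fun_pow n).const_mul ((a k * P) ^ 2)).fun_sub ((hp.fun_pow 2).mul_const (Q ^ n)))
  have hn : n ≠ 0 := (Fintype.card_pos_iff.2 ⟨k⟩).ne'
  have hfactor : (2 * a k * P ^ 2 * Q ^ n) * (n * (a k * L) - Q) = 0 := by
    linear_combination Q * hcrit - (a k * P) ^ 2 * n * 2 * L * pow_sub_one_mul hn Q
  have hne : 2 * a k * P ^ 2 * Q ^ n ≠ 0 := by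
    have := (ha k).ne'
    positivity
  exact sub_eq_zero.1 ((mul_eq_zero.1 hfactor).resolve_left hne)

theorem IsSymm.exists_mem_stdSimplex_card_mul_mul_mulVec_eq (hM : M.IsSymm)
    (hpos : ∀ i j, 0 < M i j) [Nonempty ι] :
    ∃ a ∈ stdSimplex ℝ ι, (∀ i, 0 < a i) ∧
      ∀ i, Fintype.card ι * (a i * (M *ᵥ a) i) = a ⬝ᵥ M *ᵥ a := by
  obtain ⟨a, ha, hapos, hmax⟩ := exists_pos_forall_prod_sq_mul_le hpos
  exact ⟨a, ha, hapos, hM.card_mul_mul_mulVec_eq_of_forall_prod_sq_mul_le hapos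
    (dotProduct_mulVec_self_pos_of_mem_stdSimplex hpos ha).ne' hmax⟩

end Matrix

/-- For a symmetric real matrix with positive entries there is a point `a` of
the open standard simplex at which the numbers `aᵢ·Lᵢ(a)` are all equal. -/
theorem stmt5 {r : ℕ} (hr : 0 < r) (M : Matrix (Fin r) (Fin r) ℝ)
    (hsymm : M.IsSymm) (hpos : ∀ i j, 0 < M i j)
    (L : (Fin r → ℝ) → Fin r → ℝ)
    (hL : ∀ x i, L x i = ∑ j, M i j * x j) :
    ∃ a : Fin r → ℝ, (∀ i, 0 < a i) ∧ (∑ i, a i) = 1 ∧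
      ∀ i j, a i * L a i = a j * L a j := by
  have : Nonempty (Fin r) := ⟨⟨0, hr⟩⟩
  obtain ⟨a, ha, hapos, hbalanced⟩ := hsymm.exists_mem_stdSimplex_card_mul_mul_mulVec_eq hpos
  have hLa : L a = M *ᵥ a := funext (hL a)
  refine ⟨a, hapos, ha.2, fun i j => ?_⟩
  rw [hLa]
  exact mul_left_cancel₀ (Nat.cast_ne_zero.2 Fintype.card_ne_zero)
    ((hbalanced i).trans (hbalanced j).symm)
end

section
/- Let b ≥ 2, let α be real, and suppose for infinitely many N there exist integers r(N), s(N), M(N) with s(N) → ∞ and rational numbers λ, μ, ν (not all zero) with ν ≠ 0 such that λ b^{r(N)} + μ b^{r(N)+s(N)} + ν M(N) = 0 and ξ(N) = M(N)/(b^{r(N)}(b^{s(N)}−1)) → α as N → ∞. Then μ + ν α = 0; in particular α is rational. -/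
open Filter Topology

/-! Solving the relation for `M(N)` gives the exact formula
`ξ(N) = -μ/ν - (λ + μ)/ν · (b^{s(N)} - 1)⁻¹`, and the second term tends to `0` as `s(N) → ∞`. -/

theorem div_mul_sub_one_eq_of_linear_relation {K : Type*} [Field K] {lam mu nu x y m : K}
    (hnu : nu ≠ 0) (hx : x ≠ 0) (hy : y ≠ 1) (h : lam * x + mu * (x * y) + nu * m = 0) :
    m / (x * (y - 1)) = -(mu / nu) - (lam + mu) / nu * (y - 1)⁻¹ := by
  have hy' : y - 1 ≠ 0 := sub_ne_zero.mpr hy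
  have hm : m = -(lam * x + mu * (x * y)) / nu := by
    rw [eq_div_iff hnu]
    linear_combination h
  rw [hm]
  field_simp
  ring

theorem tendsto_inv_pow_sub_one_nhds_zero {ι : Type*} {l : Filter ι} {b : ℝ} (hb : 1 < b)
    {s : ι → ℕ} (hs : Tendsto s l atTop) :
    Tendsto (fun i => (b ^ s i - 1)⁻¹) l (𝓝 0) :=
  (tendsto_atTop_add_const_right _ (-1)
    ((tendsto_pow_atTop_atTop_of_one_lt hb).comp hs)).inv_tendsto_atTop

/-- If `λ b^{r(N)} + μ b^{r(N)+s(N)} + ν M(N) = 0` with `ν ≠ 0`,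
`s(N) → ∞`, and `ξ(N) = M(N)/(b^{r(N)}(b^{s(N)}−1)) → α`, then
`μ + ν α = 0`; in particular `α` is rational. -/
theorem stmt13 (b : ℕ) (hb : 2 ≤ b) (α : ℝ) (lam mu nu : ℚ) (hnu : nu ≠ 0)
    (r s : ℕ → ℕ) (M : ℕ → ℤ)
    (hs : Tendsto s atTop atTop)
    (heq : ∀ N : ℕ, (lam : ℝ) * (b : ℝ) ^ (r N) +
      (mu : ℝ) * (b : ℝ) ^ (r N + s N) + (nu : ℝ) * (M N : ℝ) = 0)
    (hlim : Tendsto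
      (fun N => (M N : ℝ) / ((b : ℝ) ^ (r N) * ((b : ℝ) ^ (s N) - 1)))
      atTop (nhds α)) :
    (mu : ℝ) + (nu : ℝ) * α = 0 ∧ ∃ q : ℚ, (q : ℝ) = α := by
  have hb1 : (1 : ℝ) < b := by exact_mod_cast hb
  have hnuR : (nu : ℝ) ≠ 0 := by exact_mod_cast hnu
  have hξ : Tendsto (fun N => (M N : ℝ) / ((b : ℝ) ^ (r N) * ((b : ℝ) ^ (s N) - 1)))
      atTop (𝓝 (-((mu : ℝ) / nu))) := by
    have hformula := tendsto_const_nhds (x := -((mu : ℝ) / nu)).sub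
      ((tendsto_inv_pow_sub_one_nhds_zero hb1 hs).const_mul ((lam + mu : ℝ) / nu))
    rw [mul_zero, sub_zero] at hformula
    refine hformula.congr' ?_
    filter_upwards [hs.eventually_ge_atTop 1] with N hN
    refine (div_mul_sub_one_eq_of_linear_relation hnuR (by positivity)
      (one_lt_pow₀ hb1 (by omega)).ne' ?_).symm
    simpa only [pow_add] using heq N
  have hα : α = -((mu : ℝ) / nu) := tendsto_nhds_unique hlim hξ
  refine ⟨by rw [hα]; field_simp; ring, -(mu / nu), by push_cast [hα]; rfl⟩
end
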